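/- arXiv:1312.0966 — 4 statements merged into one kernel-verified Lean document; each statement's English description precedes it below -/
import Mathlib

section
/- Let N ≥ 3 and let T be a cellular integral (N−2)-cycle in the unit grid τ of ℝ^N. Then for every cellular integral (N−1)-chain U with ∂U = 2T there exists a cellular integral (N−1)-chain U′ with ∂U′ = T and mass U′ ≤ (mass U)/2. Consequently, the minimum mass of a cellular integral (N−1)-chain with boundary T equals half the minimum mass of a cellular integral (N−1)-chain with boundary 2T. -/
open MeasureTheory Metric Set
open scoped ENNReal NNReal

noncomputable section

/-- Euclidean space `ℝ^n`. -/
abbrev Euc (n : ℕ) : Type := EuclideanSpace ℝ (Fin n)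

/-- Index data of a cell of the unit grid of `ℝ^N`: a corner `x ∈ ℤ^N` and a set `S` of
spanning directions. -/
abbrev CellIdx (N : ℕ) : Type := (Fin N → ℤ) × Finset (Fin N)

/-- The cell of the unit grid with corner `x` and spanning directions `S`, i.e. the set
`x + Σ_{i ∈ S} [0,1] eᵢ`. -/
def gridCell (N : ℕ) (x : Fin N → ℤ) (S : Finset (Fin N)) : Set (Euc N) :=
  {y | ∀ i, if i ∈ S then (x i : ℝ) ≤ y i ∧ y i ≤ (x i : ℝ) + 1 else y i = (x i : ℝ)}

/-- A finite set of grid cells is a cellular mod-2 `d`-chain if all its cells are `d`-cells. -/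
def IsCellChain₂ (N d : ℕ) (A : Finset (CellIdx N)) : Prop := ∀ c ∈ A, c.2.card = d

/-- The support of a cellular mod-2 chain: the union of its cells. -/
def cellSupp (N : ℕ) (A : Finset (CellIdx N)) : Set (Euc N) :=
  ⋃ c ∈ A, gridCell N c.1 c.2

/-- A cellular mod-2 `d`-cycle: a cellular `d`-chain such that every `(d-1)`-cell of the grid
is a face of an even number of its cells. -/
def IsCellCycle₂ (N d : ℕ) (A : Finset (CellIdx N)) : Prop :=
  IsCellChain₂ N d A ∧
  ∀ (x : Fin N → ℤ) (S : Finset (Fin N)), S.card = d - 1 →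
    Even {c ∈ (A : Set (CellIdx N)) | gridCell N x S ⊆ gridCell N c.1 c.2}.ncard

/-- Cellular integral chains on the unit grid: finitely supported `ℤ`-valued functions on
the cells of the grid. -/
abbrev CChain (N : ℕ) : Type := CellIdx N →₀ ℤ

/-- Boundary of a single oriented grid cell, with cubical incidence numbers `±1`: for each
spanning direction `s` (with rank `k` in the sorted order of the directions), the top and
bottom faces in direction `s` occur with coefficients `±(-1)^k`. -/
def cbdCell (N : ℕ) (c : CellIdx N) : CChain N :=
  ∑ s ∈ c.2, ((-1 : ℤ) ^ (c.2.filter (· < s)).card) •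
    (Finsupp.single ((fun i => c.1 i + if i = s then 1 else 0), c.2.erase s) (1 : ℤ)
      - Finsupp.single (c.1, c.2.erase s) 1)

/-- Boundary of a cellular integral chain. -/
def cbd (N : ℕ) (T : CChain N) : CChain N := T.sum fun c a => a • cbdCell N c

/-- A cellular integral `d`-chain: supported on `d`-cells. -/
def IsCellChain (N d : ℕ) (T : CChain N) : Prop := ∀ c ∈ T.support, c.2.card = d

/-- Mass of a cellular integral chain: the sum of the absolute values of its coefficients. -/
def cmass (N : ℕ) (T : CChain N) : ℝ := T.sum fun _ a => (a.natAbs : ℝ)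

/-!
Reduce `U` mod 2. Since `∂U = 2T`, it is a mod-2 cycle of codimension one, and in `ℤ^N` with
`N ≥ 2` such a cycle bounds a finite set of `N`-cubes: dually it is a closed, finitely supported
1-cochain on the lattice `ℤ^N`, and summing it along rays in one coordinate direction gives a
finitely supported primitive. Lifting these cubes to a `0/1`-valued `N`-chain and taking its
boundary gives an integral cycle `W` with coefficients in `{-1, 0, 1}` and `W ≡ U` mod 2. Then
`A = (U + W)/2` and `B = (U - W)/2` are integral chains with `∂A = ∂B = T` and
`mass A + mass B = mass U`, so one of them has at most half the mass of `U`. Doubling a filling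
of `T` gives the reverse inequality between the minimal masses.
-/

namespace GridChain

open Finset Function

variable {N : ℕ}

def incSign (S : Finset (Fin N)) (s : Fin N) : ℤ := (-1) ^ #{t ∈ S | t < s}

lemma cbdCell_eq (x : Fin N → ℤ) (S : Finset (Fin N)) :
    cbdCell N (x, S) = ∑ s ∈ S, incSign S s •
      (Finsupp.single (x + Pi.single s 1, S.erase s) 1 - Finsupp.single (x, S.erase s) 1) := by
  refine sum_congr rfl fun s _ => ?_
  congr 4
  funext i
  simp [Pi.single_apply]

lemma cbd_eq_linearCombination (T : CChain N) :
    cbd N T = Finsupp.linearCombination ℤ (cbdCell N) T := by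
  rw [cbd, Finsupp.linearCombination_apply]

lemma cbd_add (T T' : CChain N) : cbd N (T + T') = cbd N T + cbd N T' := by
  simp only [cbd_eq_linearCombination, map_add]

lemma cbd_sub (T T' : CChain N) : cbd N (T - T') = cbd N T - cbd N T' := by
  simp only [cbd_eq_linearCombination, map_sub]

lemma cbd_nsmul (n : ℕ) (T : CChain N) : cbd N (n • T) = n • cbd N T := by
  simp only [cbd_eq_linearCombination, map_nsmul]

lemma cbd_single (c : CellIdx N) (a : ℤ) : cbd N (Finsupp.single c a) = a • cbdCell N c := by
  simp only [cbd_eq_linearCombination, Finsupp.linearCombination_single]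

lemma incSign_erase {S : Finset (Fin N)} {s t : Fin N} (hs : s ∈ S) :
    incSign (S.erase s) t = if s < t then -incSign S t else incSign S t := by
  unfold incSign
  rw [filter_erase]
  split_ifs with hlt
  · have hmem : s ∈ {t' ∈ S | t' < t} := by simp [hs, hlt]
    obtain ⟨m, hm⟩ := Nat.exists_eq_succ_of_ne_zero (card_ne_zero_of_mem hmem)
    rw [card_erase_of_mem hmem, hm, Nat.succ_sub_one, pow_succ, mul_neg_one, neg_neg]
  · rw [erase_eq_of_notMem (by simp [hlt])]

lemma incSign_mul_incSign_erase {S : Finset (Fin N)} {s t : Fin N} (hs : s ∈ S) (ht : t ∈ S)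
    (hst : s ≠ t) :
    incSign S s * incSign (S.erase s) t = -(incSign S t * incSign (S.erase t) s) := by
  rw [incSign_erase hs, incSign_erase ht]
  rcases hst.lt_or_gt with h | h
  · simp [h, h.not_gt, mul_comm]
  · simp [h, h.not_gt, mul_comm]

lemma sum_sum_erase_eq_zero_of_antisymm {α M : Type*} [DecidableEq α] [AddCommGroup M]
    {S : Finset α} {g : α → α → M} (hg : ∀ s ∈ S, ∀ t ∈ S, s ≠ t → g s t = -g t s) :
    ∑ s ∈ S, ∑ t ∈ S.erase s, g s t = 0 := by
  rw [← sum_finset_product' S.offDiag S _ fun p => by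
    rw [Finset.mem_offDiag, mem_erase, ne_comm]; tauto]
  refine sum_involution (fun p _ => p.swap) (fun p hp => ?_) (fun p hp _ => ?_)
    (fun p hp => ?_) (fun p _ => p.swap_swap)
  · obtain ⟨hs, ht, hst⟩ := Finset.mem_offDiag.mp hp
    rw [hg _ hs _ ht hst, Prod.fst_swap, Prod.snd_swap, neg_add_cancel]
  · exact fun h => (Finset.mem_offDiag.mp hp).2.2 (congrArg Prod.fst h).symm
  · obtain ⟨hs, ht, hst⟩ := Finset.mem_offDiag.mp hp
    exact Finset.mem_offDiag.mpr ⟨ht, hs, hst.symm⟩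

lemma cbd_cbdCell (c : CellIdx N) : cbd N (cbdCell N c) = 0 := by
  obtain ⟨x, S⟩ := c
  rw [cbdCell_eq, cbd_eq_linearCombination]
  simp only [map_sum, map_zsmul, map_sub, Finsupp.linearCombination_single, one_smul]
  simp only [cbdCell_eq, ← sum_sub_distrib, ← smul_sub, smul_sum, smul_smul]
  refine sum_sum_erase_eq_zero_of_antisymm fun s hs t ht hst => ?_
  rw [incSign_mul_incSign_erase hs ht hst, neg_smul, erase_right_comm, add_right_comm x]
  congr 2
  abel

lemma cbd_cbd (T : CChain N) : cbd N (cbd N T) = 0 := by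
  induction T using Finsupp.induction_linear with
  | zero => simp only [cbd_eq_linearCombination, map_zero]
  | add T T' hT hT' => rw [cbd_add, cbd_add, hT, hT', add_zero]
  | single c a => rw [cbd_single, cbd_eq_linearCombination, map_zsmul,
      ← cbd_eq_linearCombination, cbd_cbdCell, smul_zero]

lemma filter_erase_eq_eq_filter_insert_eq {α : Type*} [Fintype α] [DecidableEq α]
    (S D : Finset α) :
    {s ∈ S | S.erase s = D} = {s ∈ Dᶜ | insert s D = S} := by
  ext s
  simp only [mem_filter, Finset.mem_compl]
  constructor
  · rintro ⟨hs, rfl⟩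
    exact ⟨notMem_erase s S, insert_erase hs⟩
  · rintro ⟨hs, rfl⟩
    exact ⟨mem_insert_self s D, erase_insert hs⟩

lemma cbd_apply (U : CChain N) (z : Fin N → ℤ) (D : Finset (Fin N)) :
    cbd N U (z, D) = ∑ s ∈ Dᶜ, incSign (insert s D) s *
      (U (z - Pi.single s 1, insert s D) - U (z, insert s D)) := by
  induction U using Finsupp.induction_linear with
  | zero => simp only [cbd_eq_linearCombination, map_zero, Finsupp.coe_zero, Pi.zero_apply,
      sub_self, mul_zero, sum_const_zero]
  | add U U' hU hU' =>
    simp only [cbd_add, Finsupp.add_apply, hU, hU', ← sum_add_distrib]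
    exact sum_congr rfl fun s _ => by ring
  | single c a =>
    obtain ⟨y, S⟩ := c
    rw [cbd_single, Finsupp.smul_apply, cbdCell_eq, Finsupp.finsetSum_apply, smul_eq_mul,
      mul_sum]
    simp only [Finsupp.smul_apply, Finsupp.sub_apply, Finsupp.single_apply, Prod.mk.injEq,
      smul_eq_mul]
    rw [← sum_filter_of_ne (s := S) (p := fun s => S.erase s = D)
        fun s _ h => by_contra fun hD => h (by simp [hD]),
      ← sum_filter_of_ne (s := Dᶜ) (p := fun s => insert s D = S)
        fun s _ h => by_contra fun hD => h (by simp [Ne.symm hD]),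
      filter_erase_eq_eq_filter_insert_eq]
    refine sum_congr rfl fun s hs => ?_
    obtain ⟨hsD, rfl⟩ := mem_filter.mp hs
    simp only [erase_insert (Finset.mem_compl.mp hsD), and_true, eq_sub_iff_add_eq]
    split_ifs <;> ring

lemma update_sub_single_self (x : Fin N → ℤ) (i : Fin N) (c t : ℤ) :
    update (x - Pi.single i c) i t = update x i t := by
  funext j
  by_cases hj : j = i <;> simp [hj]

lemma update_sub_single_of_ne (x : Fin N → ℤ) {i j : Fin N} (h : j ≠ i) (t : ℤ) :
    update (x - Pi.single j 1) i t = update x i t - Pi.single j 1 := by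
  funext k
  by_cases hk : k = i
  · subst hk; simp [Ne.symm h]
  · simp [hk]

lemma update_sub_single_one (x : Fin N → ℤ) (i : Fin N) (t : ℤ) :
    update x i t - Pi.single i 1 = update x i (t - 1) := by
  funext k
  by_cases hk : k = i
  · subst hk; simp
  · simp [hk]

section Cocycle

variable {G : Type*} [AddCommGroup G]

lemma sum_Ioc_sub_sub_one (g : ℤ → G) {a b : ℤ} (hab : a ≤ b) :
    ∑ t ∈ Ioc a b, (g t - g (t - 1)) = g b - g a := by
  induction b, hab using Int.leInduction with
  | base => simp
  | succ b hab ih =>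
    rw [← Finset.insert_Ioc_right_eq_Ioc_add_one hab, sum_insert (by simp), ih,
      add_sub_cancel_right]
    abel

/-- Closedness of `v`, read as a `G`-valued 1-cochain on the lattice graph `ℤ^N` whose value on
the edge from `z - eᵢ` to `z` (dual to the face `(z, univ.erase i)`) is `v z i`: its coboundary
vanishes on every unit square. -/
def IsCocycle (v : (Fin N → ℤ) → Fin N → G) : Prop :=
  ∀ z i j, v z i - v (z - Pi.single j 1) i = v z j - v (z - Pi.single i 1) j

def rayPrimitive (v : (Fin N → ℤ) → Fin N → G) (i₀ : Fin N) (M : ℤ) (x : Fin N → ℤ) : G :=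
  ∑ t ∈ Ioc (-M) (x i₀), v (update x i₀ t) i₀

section rayPrimitive

variable {v : (Fin N → ℤ) → Fin N → G} {M : ℤ}

lemma rayPrimitive_sub_self (hv : ∀ x s i, M ≤ |x i| → v x s = 0) (i₀ : Fin N)
    (x : Fin N → ℤ) :
    rayPrimitive v i₀ M x - rayPrimitive v i₀ M (x - Pi.single i₀ 1) = v x i₀ := by
  simp only [rayPrimitive, update_sub_single_self, Pi.sub_apply, Pi.single_eq_same]
  rcases lt_or_ge (-M) (x i₀) with h | h
  · have hIoc := Finset.insert_Ioc_right_eq_Ioc_add_one (by omega : -M ≤ x i₀ - 1)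
    rw [sub_add_cancel] at hIoc
    rw [← hIoc, sum_insert (by simp), update_eq_self, add_sub_cancel_right]
  · rw [Finset.Ioc_eq_empty (by omega), Finset.Ioc_eq_empty (by omega), sum_empty, sub_zero,
      hv x i₀ i₀ (le_abs.mpr (.inr (by omega)))]

lemma rayPrimitive_sub_of_ne (hv : ∀ x s i, M ≤ |x i| → v x s = 0) (hcoc : IsCocycle v)
    {i₀ j : Fin N} (hj : j ≠ i₀) (x : Fin N → ℤ) :
    rayPrimitive v i₀ M x - rayPrimitive v i₀ M (x - Pi.single j 1) = v x j := by
  have hxj : (x - Pi.single j 1 : Fin N → ℤ) i₀ = x i₀ := by simp [Ne.symm hj]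
  simp only [rayPrimitive, hxj, update_sub_single_of_ne x hj, ← sum_sub_distrib, hcoc _ i₀ j,
    update_sub_single_one]
  rcases le_or_gt (-M) (x i₀) with h | h
  · rw [sum_Ioc_sub_sub_one (fun t => v (update x i₀ t) j) h, update_eq_self,
      hv (update x i₀ (-M)) j i₀ (by simp [le_abs_self]), sub_zero]
  · rw [Finset.Ioc_eq_empty (by omega), sum_empty,
      hv x j i₀ (le_abs.mpr (.inr (by omega)))]

/-- Below height `-M` the ray is empty, beside the box it misses the support of `v`, and above
height `M` the primitive is invariant under shifts in a second direction `j`, which lead out of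
the box. -/
lemma rayPrimitive_eq_zero (hv : ∀ x s i, M ≤ |x i| → v x s = 0) (hcoc : IsCocycle v)
    {i₀ j : Fin N} (hj : j ≠ i₀) {x : Fin N → ℤ} {i : Fin N} (hi : M ≤ |x i|) :
    rayPrimitive v i₀ M x = 0 := by
  have beside : ∀ {y : Fin N → ℤ} {k : Fin N}, k ≠ i₀ → M ≤ |y k| → rayPrimitive v i₀ M y = 0 :=
    fun hk hyk => sum_eq_zero fun t _ => hv _ _ _ (by rwa [update_of_ne hk])
  by_cases hii₀ : i = i₀
  · subst hii₀
    rcases le_abs'.mp hi with hx | hx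
    · exact sum_eq_zero fun t ht => by simp at ht; omega
    · have hper : Periodic (fun t => rayPrimitive v i M (update x j t)) 1 := fun t => by
        have h := rayPrimitive_sub_of_ne hv hcoc hj (update x j (t + 1))
        rwa [update_sub_single_one, add_sub_cancel_right,
          hv _ j i (by rwa [update_of_ne (Ne.symm hj)]), sub_eq_zero] at h
      have := (hper.int_mul_eq (x j)).trans (hper.int_mul_eq (-M)).symm
      simp only [mul_one, Int.cast_id, update_eq_self] at this
      rw [this]
      exact beside hj (by simp [le_abs_self])
  · exact beside hii₀ hi

end rayPrimitive

theorem exists_finsupp_sub_eq_of_isCocycle (hN : 2 ≤ N) {v : (Fin N → ℤ) → Fin N → G}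
    (hcoc : IsCocycle v) (M : ℤ) (hv : ∀ x s i, M ≤ |x i| → v x s = 0) :
    ∃ F : (Fin N → ℤ) →₀ G, ∀ x s, F x - F (x - Pi.single s 1) = v x s := by
  let i₀ : Fin N := ⟨0, by omega⟩
  let j : Fin N := ⟨1, by omega⟩
  have hj : j ≠ i₀ := by simp [i₀, j, Fin.ext_iff]
  refine ⟨Finsupp.onFinset (Fintype.piFinset fun _ => Finset.Ioo (-M) M) (rayPrimitive v i₀ M)
    fun x hx => Fintype.mem_piFinset.mpr fun i => ?_, fun x s => ?_⟩
  · by_contra hi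
    rw [Finset.mem_Ioo] at hi
    exact hx (rayPrimitive_eq_zero hv hcoc hj (i := i) (le_abs'.mpr (by omega)))
  · rw [Finsupp.onFinset_apply, Finsupp.onFinset_apply]
    by_cases hs : s = i₀
    · rw [hs]; exact rayPrimitive_sub_self hv i₀ x
    · exact rayPrimitive_sub_of_ne hv hcoc hs x

end Cocycle

lemma exists_eq_univ_erase_of_card_eq {α : Type*} [Fintype α] [DecidableEq α]
    (hα : 1 ≤ Fintype.card α) {D : Finset α} (hD : #D = Fintype.card α - 1) :
    ∃ s, D = univ.erase s := by
  obtain ⟨s, hs⟩ := card_eq_one.mp (by rw [card_compl, hD]; omega : #Dᶜ = 1)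
  exact ⟨s, by rw [← compl_singleton, ← hs, compl_compl]⟩

def topChain (w : (Fin N → ℤ) →₀ ℤ) : CChain N := w.mapDomain (·, Finset.univ)

lemma topChain_apply (w : (Fin N → ℤ) →₀ ℤ) (x : Fin N → ℤ) : topChain w (x, univ) = w x :=
  Finsupp.mapDomain_apply (fun _ _ h => congrArg Prod.fst h) w x

lemma topChain_apply_of_ne_univ (w : (Fin N → ℤ) →₀ ℤ) (x : Fin N → ℤ) {S : Finset (Fin N)}
    (hS : S ≠ Finset.univ) : topChain w (x, S) = 0 :=
  Finsupp.mapDomain_of_notMem_range _ _ fun ⟨_, h⟩ => hS (congrArg Prod.snd h).symm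

lemma cbd_topChain_apply_univ_erase (w : (Fin N → ℤ) →₀ ℤ) (z : Fin N → ℤ) (s : Fin N) :
    cbd N (topChain w) (z, univ.erase s) = incSign univ s * (w (z - Pi.single s 1) - w z) := by
  rw [cbd_apply, compl_erase, Finset.compl_univ, insert_empty, sum_singleton,
    insert_erase (mem_univ s), topChain_apply, topChain_apply]

lemma cbd_topChain_apply_of_forall_ne (w : (Fin N → ℤ) →₀ ℤ) (z : Fin N → ℤ)
    {D : Finset (Fin N)} (hD : ∀ s, D ≠ univ.erase s) : cbd N (topChain w) (z, D) = 0 := by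
  rw [cbd_apply]
  refine sum_eq_zero fun s hs => ?_
  have hsD : insert s D ≠ Finset.univ := fun h =>
    hD s (by rw [← h, erase_insert (Finset.mem_compl.mp hs)])
  rw [topChain_apply_of_ne_univ _ _ hsD, topChain_apply_of_ne_univ _ _ hsD, sub_self, mul_zero]

lemma intCast_incSign (S : Finset (Fin N)) (s : Fin N) : ((incSign S s : ℤ) : ZMod 2) = 1 := by
  rw [incSign, Int.cast_pow, Int.cast_neg, Int.cast_one, CharTwo.neg_eq, one_pow]

lemma abs_incSign (S : Finset (Fin N)) (s : Fin N) : |incSign S s| = 1 := by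
  rw [incSign, abs_pow, abs_neg, abs_one, one_pow]

lemma isCocycle_of_cbd_eq_zero_mod_two {U : CChain N}
    (hU : ∀ d, ((cbd N U d : ℤ) : ZMod 2) = 0) :
    IsCocycle fun x s => ((U (x, univ.erase s) : ℤ) : ZMod 2) := by
  intro z i j
  rcases eq_or_ne i j with rfl | hij
  · rfl
  have h := hU (z, (univ.erase i).erase j)
  have hj : insert j ((univ.erase i).erase j) = univ.erase i :=
    insert_erase (mem_erase.mpr ⟨hij.symm, mem_univ j⟩)
  have hi : insert i ((univ.erase i).erase j) = univ.erase j := by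
    rw [erase_right_comm, insert_erase (mem_erase.mpr ⟨hij, mem_univ i⟩)]
  rw [cbd_apply, compl_erase, compl_erase, Finset.compl_univ, insert_empty,
    sum_pair hij.symm, hi, hj] at h
  push_cast [intCast_incSign, one_mul] at h
  linear_combination (norm := ring_nf) h
  reduce_mod_char

lemma exists_abs_lt (s : Finset (CellIdx N)) : ∃ M : ℤ, ∀ c ∈ s, ∀ i, |c.1 i| < M := by
  refine ⟨∑ c ∈ s, ∑ i, |c.1 i| + 1, fun c hc i => ?_⟩
  have hi := single_le_sum (f := fun i => |c.1 i|) (fun i _ => abs_nonneg _) (mem_univ i)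
  have hc := single_le_sum (f := fun c : CellIdx N => ∑ i, |c.1 i|)
    (fun c _ => sum_nonneg fun i _ => abs_nonneg _) hc
  omega

theorem exists_cycle_modEq_of_cbd_eq_zero_mod_two (hN : 2 ≤ N) {U : CChain N}
    (hU : IsCellChain N (N - 1) U) (hU2 : ∀ d, ((cbd N U d : ℤ) : ZMod 2) = 0) :
    ∃ W : CChain N, cbd N W = 0 ∧ ∀ d, |W d| ≤ 1 ∧ W d ≡ U d [ZMOD 2] := by
  obtain ⟨M, hM⟩ := exists_abs_lt U.support
  have hv : ∀ x s i, M ≤ |x i| → ((U (x, univ.erase s) : ℤ) : ZMod 2) = 0 :=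
    fun x s i hx => by
      rw [Finsupp.notMem_support_iff.mp fun h => (hM _ h i).not_ge hx, Int.cast_zero]
  obtain ⟨F, hF⟩ := exists_finsupp_sub_eq_of_isCocycle hN
    (isCocycle_of_cbd_eq_zero_mod_two hU2) M hv
  let w : (Fin N → ℤ) →₀ ℤ := F.mapRange (fun a => (a.val : ℤ)) (by simp)
  have hw : ∀ x, 0 ≤ w x ∧ w x ≤ 1 := fun x => by
    have := ZMod.val_lt (F x); simp only [w, Finsupp.mapRange_apply]; omega
  have hw2 : ∀ x, ((w x : ℤ) : ZMod 2) = F x := fun x => by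
    simp only [w, Finsupp.mapRange_apply, Int.cast_natCast, ZMod.natCast_zmod_val]
  refine ⟨cbd N (topChain w), cbd_cbd _, fun ⟨z, D⟩ => ?_⟩
  by_cases hD : ∃ s, D = univ.erase s
  · obtain ⟨s, rfl⟩ := hD
    rw [cbd_topChain_apply_univ_erase, abs_mul, abs_incSign, one_mul]
    refine ⟨abs_le.mpr (by have := hw z; have := hw (z - Pi.single s 1); omega),
      (ZMod.intCast_eq_intCast_iff _ _ 2).mp ?_⟩
    push_cast [intCast_incSign, hw2, one_mul]
    rw [← hF z s, ← neg_sub, CharTwo.neg_eq]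
  · replace hD := not_exists.mp hD
    have hUz : U (z, D) = 0 := Finsupp.notMem_support_iff.mp fun h => by
      obtain ⟨s, hs⟩ := exists_eq_univ_erase_of_card_eq (D := D)
        (by rw [Fintype.card_fin]; omega) (by rw [Fintype.card_fin]; exact hU _ h)
      exact hD s hs
    rw [cbd_topChain_apply_of_forall_ne _ _ hD, hUz]
    exact ⟨by simp, rfl⟩

lemma cmass_nonneg (T : CChain N) : 0 ≤ cmass N T :=
  sum_nonneg fun _ _ => Nat.cast_nonneg _

lemma cmass_add_cmass_of_natAbs {A B C : CChain N}
    (h : ∀ c, (A c).natAbs + (B c).natAbs = (C c).natAbs) :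
    cmass N A + cmass N B = cmass N C := by
  have hmass : ∀ X : CChain N, X.support ⊆ A.support ∪ B.support ∪ C.support →
      cmass N X = ∑ c ∈ A.support ∪ B.support ∪ C.support, ((X c).natAbs : ℝ) :=
    fun X hX => Finsupp.sum_of_support_subset X hX _ fun _ _ => by simp
  rw [hmass A (by intro c; simp; tauto), hmass B (by intro c; simp; tauto),
    hmass C (by intro c; simp; tauto), ← sum_add_distrib]
  exact sum_congr rfl fun c _ => by rw [← Nat.cast_add, h]

lemma exists_add_eq_sub_eq_of_modEq {α : Type*} {U W : α →₀ ℤ}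
    (hW : ∀ a, |W a| ≤ 1 ∧ W a ≡ U a [ZMOD 2]) :
    ∃ A B : α →₀ ℤ, A + B = U ∧ A - B = W ∧
      ∀ a, (A a).natAbs + (B a).natAbs = (U a).natAbs := by
  have key : ∀ a, (U a + W a) / 2 + (U a - W a) / 2 = U a ∧
      (U a + W a) / 2 - (U a - W a) / 2 = W a ∧
      ((U a + W a) / 2).natAbs + ((U a - W a) / 2).natAbs = (U a).natAbs := fun a => by
    obtain ⟨h₁, h₂⟩ := hW a
    rw [abs_le] at h₁
    unfold Int.ModEq at h₂
    omega
  refine ⟨(U + W).mapRange (· / 2) (by simp), (U - W).mapRange (· / 2) (by simp),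
    Finsupp.ext fun a => ?_, Finsupp.ext fun a => ?_, fun a => ?_⟩ <;>
  simp only [Finsupp.add_apply, Finsupp.sub_apply, Finsupp.mapRange_apply] <;>
  simp only [key a]

theorem exists_cbd_eq_cmass_le_half (hN : 2 ≤ N) {T U : CChain N}
    (hU : IsCellChain N (N - 1) U) (hUT : cbd N U = 2 • T) :
    ∃ U' : CChain N, IsCellChain N (N - 1) U' ∧ cbd N U' = T ∧ cmass N U' ≤ cmass N U / 2 := by
  have hU2 : ∀ d, ((cbd N U d : ℤ) : ZMod 2) = 0 := fun d => by
    rw [hUT, Finsupp.smul_apply, nsmul_eq_mul]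
    push_cast
    exact mul_eq_zero_of_left rfl _
  obtain ⟨W, hWcyc, hW⟩ := exists_cycle_modEq_of_cbd_eq_zero_mod_two hN hU hU2
  obtain ⟨A, B, hAB, hAB', habs⟩ := exists_add_eq_sub_eq_of_modEq hW
  have hcbdA : cbd N A = cbd N B := by
    rw [← sub_eq_zero, ← cbd_sub, hAB', hWcyc]
  have hcbd : cbd N A = T ∧ cbd N B = T := by
    have h2A : 2 • cbd N A = 2 • T := by rw [← hUT, ← hAB, cbd_add, ← hcbdA, two_nsmul]
    have hA := (nsmul_right_inj two_ne_zero).mp h2A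
    exact ⟨hA, hcbdA ▸ hA⟩
  have hdim : ∀ X : CChain N, (∀ c, (X c).natAbs ≤ (U c).natAbs) → IsCellChain N (N - 1) X :=
    fun X hX c hc => hU c (Finsupp.mem_support_iff.mpr fun h =>
      Finsupp.mem_support_iff.mp hc (by have := hX c; rw [h] at this; omega))
  have hmass := cmass_add_cmass_of_natAbs habs
  rcases le_or_gt (cmass N A) (cmass N U / 2) with h | h
  · exact ⟨A, hdim A fun c => by have := habs c; omega, hcbd.1, h⟩
  · exact ⟨B, hdim B fun c => by have := habs c; omega, hcbd.2, by linarith⟩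

lemma isCellChain_nsmul {d : ℕ} {T : CChain N} (hT : IsCellChain N d T) (n : ℕ) :
    IsCellChain N d (n • T) :=
  fun c hc => hT c (Finsupp.support_smul hc)

lemma cmass_nsmul (n : ℕ) (T : CChain N) : cmass N (n • T) = n * cmass N T := by
  rw [cmass, cmass, Finsupp.sum_of_support_subset _ Finsupp.support_smul _ fun _ _ => by simp,
    Finsupp.sum, mul_sum]
  refine sum_congr rfl fun c _ => ?_
  rw [Finsupp.smul_apply, nsmul_eq_mul, Int.natAbs_mul, Int.natAbs_natCast, Nat.cast_mul]

lemma sInf_eq_sInf_div_two {S₁ S₂ : Set ℝ} (h₁ : BddBelow S₁) (h₂ : BddBelow S₂)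
    (half : ∀ m ∈ S₂, ∃ m' ∈ S₁, m' ≤ m / 2) (double : ∀ m ∈ S₁, 2 * m ∈ S₂) :
    sInf S₁ = sInf S₂ / 2 := by
  rcases S₂.eq_empty_or_nonempty with hS₂ | hS₂
  · have hS₁ : S₁ = ∅ := Set.eq_empty_of_forall_notMem fun m hm => by
      simpa [hS₂] using double m hm
    simp [hS₁, hS₂]
  obtain ⟨m₂, hm₂⟩ := hS₂
  obtain ⟨m₁, hm₁, -⟩ := half m₂ hm₂
  refine le_antisymm ?_ ?_
  · have : 2 * sInf S₁ ≤ sInf S₂ := le_csInf ⟨m₂, hm₂⟩ fun m hm => by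
      obtain ⟨m', hm', hle⟩ := half m hm
      linarith [csInf_le h₁ hm']
    linarith
  · exact le_csInf ⟨m₁, hm₁⟩ fun m hm => by linarith [csInf_le h₂ (double m hm)]

end GridChain

theorem codimension_one_halving_general (N : ℕ) (hN : 3 ≤ N) (T : CChain N) :
    (∀ U : CChain N, IsCellChain N (N - 1) U → cbd N U = 2 • T →
      ∃ U' : CChain N, IsCellChain N (N - 1) U' ∧ cbd N U' = T ∧
        cmass N U' ≤ cmass N U / 2) ∧
    sInf {m : ℝ | ∃ U : CChain N, IsCellChain N (N - 1) U ∧ cbd N U = T ∧ cmass N U = m} =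
      sInf {m : ℝ | ∃ U : CChain N, IsCellChain N (N - 1) U ∧ cbd N U = 2 • T ∧
        cmass N U = m} / 2 := by
  have half : ∀ U : CChain N, IsCellChain N (N - 1) U → cbd N U = 2 • T →
      ∃ U' : CChain N, IsCellChain N (N - 1) U' ∧ cbd N U' = T ∧ cmass N U' ≤ cmass N U / 2 :=
    fun U hU hUT => GridChain.exists_cbd_eq_cmass_le_half (by omega) hU hUT
  refine ⟨half, GridChain.sInf_eq_sInf_div_two ⟨0, ?_⟩ ⟨0, ?_⟩ ?_ ?_⟩
  · rintro _ ⟨U, -, -, rfl⟩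
    exact GridChain.cmass_nonneg U
  · rintro _ ⟨U, -, -, rfl⟩
    exact GridChain.cmass_nonneg U
  · rintro _ ⟨U, hU, hUT, rfl⟩
    obtain ⟨U', hU', hU'T, hle⟩ := half U hU hUT
    exact ⟨_, ⟨U', hU', hU'T, rfl⟩, hle⟩
  · rintro _ ⟨U, hU, hUT, rfl⟩
    exact ⟨2 • U, GridChain.isCellChain_nsmul hU 2, by rw [GridChain.cbd_nsmul, hUT],
      by rw [GridChain.cmass_nsmul, Nat.cast_ofNat]⟩

/-- Let `N ≥ 3` and let `T` be a cellular integral `(N-2)`-cycle in the unit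
grid of `ℝ^N`.  For every cellular integral `(N-1)`-chain `U` with `∂U = 2T` there is a
cellular integral `(N-1)`-chain `U'` with `∂U' = T` and `mass U' ≤ (mass U)/2`; consequently
the minimal filling mass of `T` is half that of `2T`. -/
theorem codimension_one_halving (N : ℕ) (hN : 3 ≤ N) (T : CChain N)
    (hTdim : IsCellChain N (N - 2) T) (hTcyc : cbd N T = 0) :
    (∀ U : CChain N, IsCellChain N (N - 1) U → cbd N U = 2 • T →
      ∃ U' : CChain N, IsCellChain N (N - 1) U' ∧ cbd N U' = T ∧
        cmass N U' ≤ cmass N U / 2) ∧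
    sInf {m : ℝ | ∃ U : CChain N, IsCellChain N (N - 1) U ∧ cbd N U = T ∧ cmass N U = m} =
      sInf {m : ℝ | ∃ U : CChain N, IsCellChain N (N - 1) U ∧ cbd N U = 2 • T ∧
        cmass N U = m} / 2 :=
  codimension_one_halving_general N hN T

end
end

section
/- Let N ≥ 2. Every cellular mod-2 (N−1)-cycle A in the unit grid τ of ℝ^N is orientable: there exists a cellular integral (N−1)-cycle R all of whose coefficients lie in {−1, 0, 1}, whose mod-2 reduction equals A, and whose support equals supp A. -/
open MeasureTheory Metric Set
open scoped ENNReal NNReal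

noncomputable section

/-!
Fix a direction `z` and give the unit cube with corner `y` the colour
`rayParity A z y ∈ ZMod 2`: the parity of the number of cells of `A` met by the ray leaving the
centre of the cube in direction `e_z`. The mod-2 cycle condition at the `(N-2)`-cells shows that
crossing a grid face `(y, {j}ᶜ)` changes the colour exactly when that face lies in `A`; in
particular the colour is constant along lines in a second direction `j ≠ z` below `A`, so only
finitely many cubes are coloured `1`. The integral boundary `R` of the union of these cubes is a
cycle because `∂ ∘ ∂ = 0`, and its coefficient at a face is `±` the difference of the colours of
the two cubes it separates: it lies in `{-1, 0, 1}` and is odd exactly on the faces in `A`.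
-/

open Finset

section

variable {N : ℕ}

def cubeSign (S : Finset (Fin N)) (s : Fin N) : ℤ := (-1) ^ #(S.filter (· < s))

lemma cubeSign_eq_one_or_neg_one (S : Finset (Fin N)) (s : Fin N) :
    cubeSign S s = 1 ∨ cubeSign S s = -1 :=
  neg_one_pow_eq_or ℤ _

lemma cbdCell_eq (x : Fin N → ℤ) (S : Finset (Fin N)) :
    cbdCell N (x, S) = ∑ s ∈ S, cubeSign S s •
      (Finsupp.single (x + Pi.single s 1, S.erase s) 1 - Finsupp.single (x, S.erase s) 1) := by
  refine sum_congr rfl fun s _ => ?_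
  congr 4
  ext i
  simp [Pi.single_apply]

lemma cbd_eq_linearCombination (T : CChain N) :
    cbd N T = Finsupp.linearCombination ℤ (cbdCell N) T :=
  (Finsupp.linearCombination_apply ℤ T).symm

lemma cubeSign_mul_cubeSign_erase_of_lt {S : Finset (Fin N)} {s t : Fin N} (hs : s ∈ S)
    (hst : s < t) :
    cubeSign S s * cubeSign (S.erase s) t = -(cubeSign S t * cubeSign (S.erase t) s) := by
  have hlt : (S.erase s).filter (· < t) = (S.filter (· < t)).erase s := filter_erase _ _ _
  have hgt : (S.erase t).filter (· < s) = S.filter (· < s) := by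
    rw [filter_erase, erase_eq_of_notMem (by simp [hst.not_gt])]
  have hpos : 0 < #(S.filter (· < t)) := card_pos.mpr ⟨s, mem_filter.mpr ⟨hs, hst⟩⟩
  obtain ⟨b, hb⟩ : ∃ b, #(S.filter (· < t)) = b + 1 :=
    ⟨_, (Nat.succ_pred_eq_of_pos hpos).symm⟩
  have hcard : #((S.erase s).filter (· < t)) = b := by
    rw [hlt, card_erase_of_mem (mem_filter.mpr ⟨hs, hst⟩), hb, Nat.add_sub_cancel]
  simp only [cubeSign, hcard, hgt, hb, pow_succ]
  ring

lemma cubeSign_mul_cubeSign_erase {S : Finset (Fin N)} {s t : Fin N} (hs : s ∈ S) (ht : t ∈ S)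
    (hst : s ≠ t) :
    cubeSign S s * cubeSign (S.erase s) t = -(cubeSign S t * cubeSign (S.erase t) s) := by
  rcases hst.lt_or_gt with h | h
  · exact cubeSign_mul_cubeSign_erase_of_lt hs h
  · rw [cubeSign_mul_cubeSign_erase_of_lt ht h, neg_neg]

lemma sum_sum_erase_eq_zero {α M : Type*} [DecidableEq α] [AddCommGroup M] (S : Finset α)
    (f : α → α → M) (hf : ∀ s ∈ S, ∀ t ∈ S, s ≠ t → f s t = -f t s) :
    ∑ s ∈ S, ∑ t ∈ S.erase s, f s t = 0 := by
  rw [sum_sigma']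
  refine sum_involution (fun p _ => ⟨p.2, p.1⟩) (fun p hp => ?_) (fun p hp _ h => ?_)
    (fun p hp => ?_) (fun _ _ => rfl) <;> simp only [mem_sigma, mem_erase] at hp
  · rw [hf p.1 hp.1 p.2 hp.2.2 (Ne.symm hp.2.1), neg_add_cancel]
  · exact hp.2.1 (congrArg Sigma.fst h)
  · simp only [mem_sigma, mem_erase]
    exact ⟨hp.2.2, Ne.symm hp.2.1, hp.1⟩

lemma cbd_cbdCell (c : CellIdx N) : cbd N (cbdCell N c) = 0 := by
  obtain ⟨x, S⟩ := c
  set Q : Fin N → Fin N → CChain N := fun s t =>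
    Finsupp.single (x + Pi.single s 1 + Pi.single t 1, (S.erase s).erase t) 1
      - Finsupp.single (x + Pi.single s 1, (S.erase s).erase t) 1
      - Finsupp.single (x + Pi.single t 1, (S.erase s).erase t) 1
      + Finsupp.single (x, (S.erase s).erase t) 1 with hQ
  have hQ_symm : ∀ s t, Q s t = Q t s := fun s t => by
    simp only [hQ, erase_right_comm (a := s) (b := t), add_right_comm x (Pi.single s 1)]
    abel
  calc cbd N (cbdCell N (x, S))
      = ∑ s ∈ S, ∑ t ∈ S.erase s, (cubeSign S s * cubeSign (S.erase s) t) • Q s t := by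
        simp only [cbd_eq_linearCombination, cbdCell_eq, map_sum, map_zsmul, map_sub,
          Finsupp.linearCombination_single, one_smul, smul_sum, ← sum_sub_distrib]
        refine sum_congr rfl fun s _ => sum_congr rfl fun t _ => ?_
        simp only [hQ, smul_sub, smul_add, smul_smul]
        abel
    _ = 0 := sum_sum_erase_eq_zero S _ fun s hs t ht hst => by
        rw [hQ_symm, cubeSign_mul_cubeSign_erase hs ht hst, neg_smul]

lemma cbd_cbd (T : CChain N) : cbd N (cbd N T) = 0 := by
  rw [cbd_eq_linearCombination T, Finsupp.linearCombination_apply, cbd_eq_linearCombination,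
    map_finsuppSum]
  simp [← cbd_eq_linearCombination, cbd_cbdCell]

lemma cbdCell_apply_of_forall_ne {c F : CellIdx N} (h : ∀ s ∈ c.2, F.2 ≠ c.2.erase s) :
    cbdCell N c F = 0 := by
  obtain ⟨x, S⟩ := c
  rw [cbdCell_eq, Finsupp.finsetSum_apply]
  refine sum_eq_zero fun s hs => ?_
  have hF : ∀ y : Fin N → ℤ, (y, S.erase s) ≠ F := fun y hy => h s hs (congrArg Prod.snd hy).symm
  simp only [Finsupp.smul_apply, Finsupp.sub_apply, Finsupp.single_apply, if_neg (hF _),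
    sub_self, smul_zero]

lemma isCellChain_cbd {d : ℕ} {T : CChain N} (hT : IsCellChain N d T) :
    IsCellChain N (d - 1) (cbd N T) := by
  intro F hF
  rw [Finsupp.mem_support_iff, cbd, Finsupp.sum_apply] at hF
  obtain ⟨c, hc, hcF⟩ := exists_ne_zero_of_sum_ne_zero hF
  by_contra hcard
  refine hcF ?_
  dsimp only
  rw [Finsupp.smul_apply, cbdCell_apply_of_forall_ne, smul_zero]
  intro s hs hFs
  rw [hFs, card_erase_of_mem hs, hT c hc] at hcard
  exact hcard rfl

lemma isCellChain_mapDomain_univ (w : (Fin N → ℤ) →₀ ℤ) :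
    IsCellChain N N (w.mapDomain (·, univ)) := by
  intro c hc
  obtain ⟨y, -, rfl⟩ := mem_image.mp (Finsupp.mapDomain_support hc)
  exact card_fin N

lemma cbdCell_univ_apply (y x : Fin N → ℤ) (t : Fin N) :
    cbdCell N (y, univ) (x, {t}ᶜ) =
      cubeSign univ t * ((if x - Pi.single t 1 = y then 1 else 0) - if x = y then 1 else 0) := by
  rw [cbdCell_eq, Finsupp.finsetSum_apply, sum_eq_single t]
  · have htop : y + Pi.single t 1 = x ↔ x - Pi.single t 1 = y := by
      rw [sub_eq_iff_eq_add, eq_comm]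
    simp [Finsupp.single_apply, compl_singleton, htop, eq_comm (a := y)]
  · intro s _ hst
    simp [compl_singleton, erase_inj _ (mem_univ s), hst]
  · simp

lemma cbd_mapDomain_univ_apply (w : (Fin N → ℤ) →₀ ℤ) (x : Fin N → ℤ) (t : Fin N) :
    cbd N (w.mapDomain (·, univ)) (x, {t}ᶜ) =
      cubeSign univ t * (w (x - Pi.single t 1) - w x) := by
  rw [cbd_eq_linearCombination, Finsupp.linearCombination_mapDomain,
    Finsupp.linearCombination_apply, Finsupp.sum_apply]
  calc w.sum (fun y a => (a • (cbdCell N ∘ (·, univ)) y) (x, {t}ᶜ))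
      = cubeSign univ t * w.sum fun y a =>
          (if x - Pi.single t 1 = y then a else 0) - if x = y then a else 0 := by
        rw [Finsupp.mul_sum]
        refine Finsupp.sum_congr fun y _ => ?_
        rw [Finsupp.smul_apply, Function.comp_apply, cbdCell_univ_apply, smul_eq_mul]
        split_ifs <;> ring
    _ = cubeSign univ t * (w (x - Pi.single t 1) - w x) := by
        rw [Finsupp.sum_sub, Finsupp.sum_ite_self_eq, Finsupp.sum_ite_self_eq]

def cellTop (x : Fin N → ℤ) (S : Finset (Fin N)) : Fin N → ℤ :=
  fun i => x i + if i ∈ S then 1 else 0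

lemma gridCell_eq_preimage_Icc (x : Fin N → ℤ) (S : Finset (Fin N)) :
    gridCell N x S =
      WithLp.ofLp ⁻¹' Set.Icc (fun i => (x i : ℝ)) (fun i => (cellTop x S i : ℝ)) := by
  ext y
  simp only [gridCell, cellTop, Set.mem_ofPred_eq, Set.mem_preimage, Set.mem_Icc, Pi.le_def,
    ← forall_and]
  refine forall_congr' fun i => ?_
  split_ifs
  · push_cast
    rfl
  · simp [le_antisymm_iff, and_comm]

lemma gridCell_subset_gridCell_iff {v x : Fin N → ℤ} {T S : Finset (Fin N)} :
    gridCell N v T ⊆ gridCell N x S ↔ x ≤ v ∧ cellTop v T ≤ cellTop x S := by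
  have hle : ∀ (y : Fin N → ℤ) (U : Finset (Fin N)), y ≤ cellTop y U := fun y U i => by
    simp only [cellTop]
    split_ifs <;> omega
  rw [gridCell_eq_preimage_Icc, gridCell_eq_preimage_Icc,
    Set.preimage_subset_preimage_iff fun y _ => WithLp.ofLp_surjective 2 y,
    Set.Icc_subset_Icc_iff fun i => Int.cast_le.mpr (hle v T i)]
  simp only [Pi.le_def, Int.cast_le]

lemma subset_of_gridCell_subset_gridCell {v x : Fin N → ℤ} {T S : Finset (Fin N)}
    (h : gridCell N v T ⊆ gridCell N x S) : T ⊆ S := fun i hi => by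
  obtain ⟨hxv, htop⟩ := gridCell_subset_gridCell_iff.mp h
  have := htop i
  simp only [cellTop, hi, if_true] at this
  by_contra hiS
  simp only [hiS, if_false] at this
  linarith [hxv i]

lemma gridCell_subset_gridCell_insert_iff {v x : Fin N → ℤ} {T : Finset (Fin N)} {s : Fin N}
    (hs : s ∉ T) :
    gridCell N v T ⊆ gridCell N x (insert s T) ↔ x = v ∨ x = v - Pi.single s 1 := by
  rw [gridCell_subset_gridCell_iff]
  constructor
  · rintro ⟨hxv, htop⟩
    have hoff : ∀ i ≠ s, x i = v i := fun i hi => by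
      have := htop i
      simp only [cellTop, Finset.mem_insert, hi, false_or] at this
      split_ifs at this <;> linarith [hxv i]
    have := htop s
    simp only [cellTop, Finset.mem_insert_self, if_true, hs, if_false] at this
    rcases (show x s = v s ∨ x s = v s - 1 by have : x s ≤ v s := hxv s; omega) with h | h
    · left
      ext i
      rcases eq_or_ne i s with rfl | hi
      · exact h
      · exact hoff i hi
    · right
      ext i
      rcases eq_or_ne i s with rfl | hi
      · simp [h]
      · simp [hoff i hi, hi]
  · rintro (rfl | rfl) <;> refine ⟨fun i => ?_, fun i => ?_⟩ <;>
      rcases eq_or_ne i s with rfl | hi <;> simp [cellTop, *]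

lemma ne_sub_single (v : Fin N → ℤ) (s : Fin N) : v ≠ v - Pi.single s 1 := fun h => by
  have := congrFun h s
  rw [Pi.sub_apply, Pi.single_eq_same] at this
  omega

def cofaces (v : Fin N → ℤ) (T : Finset (Fin N)) : Finset (CellIdx N) :=
  Tᶜ.biUnion fun s => {(v, insert s T), (v - Pi.single s 1, insert s T)}

lemma gridCell_subset_iff_mem_cofaces {v : Fin N → ℤ} {T : Finset (Fin N)} {c : CellIdx N}
    (hc : #c.2 = #T + 1) : gridCell N v T ⊆ gridCell N c.1 c.2 ↔ c ∈ cofaces v T := by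
  obtain ⟨x, S⟩ := c
  rw [cofaces, Finset.mem_biUnion]
  simp only [Finset.mem_compl, Finset.mem_insert, Finset.mem_singleton, Prod.ext_iff]
  constructor
  · intro h
    obtain ⟨s, hs, rfl⟩ :=
      exists_eq_insert_iff.mpr ⟨subset_of_gridCell_subset_gridCell h, hc.symm⟩
    have := (gridCell_subset_gridCell_insert_iff hs).mp h
    exact ⟨s, hs, by tauto⟩
  · rintro ⟨s, hs, ⟨rfl, rfl⟩ | ⟨rfl, rfl⟩⟩
    exacts [(gridCell_subset_gridCell_insert_iff hs).mpr (Or.inl rfl),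
      (gridCell_subset_gridCell_insert_iff hs).mpr (Or.inr rfl)]

lemma sum_cofaces {M : Type*} [AddCommMonoid M] (v : Fin N → ℤ) (T : Finset (Fin N))
    (f : CellIdx N → M) :
    ∑ c ∈ cofaces v T, f c =
      ∑ s ∈ Tᶜ, (f (v, insert s T) + f (v - Pi.single s 1, insert s T)) := by
  rw [cofaces, sum_biUnion]
  · exact sum_congr rfl fun s _ => sum_pair fun h => ne_sub_single v s (congrArg Prod.fst h)
  · intro s hs t ht hst
    simp only [Function.onFun, Finset.disjoint_left, Finset.mem_insert, Finset.mem_singleton,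
      coe_compl, Set.mem_compl_iff, mem_coe] at hs ht ⊢
    have hne : insert s T ≠ insert t T := fun h =>
      hst ((mem_insert.mp (h ▸ mem_insert_self s T)).resolve_right hs)
    rintro c (rfl | rfl) (h | h) <;> exact hne (congrArg Prod.snd h)

def coeff₂ (A : Finset (CellIdx N)) (c : CellIdx N) : ZMod 2 := if c ∈ A then 1 else 0

lemma coeff₂_eq_one_iff {A : Finset (CellIdx N)} {c : CellIdx N} : coeff₂ A c = 1 ↔ c ∈ A := by
  unfold coeff₂
  split_ifs with h <;> simp [h]

lemma IsCellCycle₂.sum_cofaces_coeff₂ {d : ℕ} {A : Finset (CellIdx N)}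
    (hA : IsCellCycle₂ N d A) (hd : 1 ≤ d) (v : Fin N → ℤ) {T : Finset (Fin N)}
    (hT : #T = d - 1) : ∑ c ∈ cofaces v T, coeff₂ A c = 0 := by
  have hset : {c ∈ (A : Set (CellIdx N)) | gridCell N v T ⊆ gridCell N c.1 c.2} =
      ↑((cofaces v T).filter (· ∈ A)) := by
    ext c
    simp only [Set.mem_ofPred_eq, mem_coe, coe_filter]
    constructor
    · rintro ⟨hc, hsub⟩
      exact ⟨(gridCell_subset_iff_mem_cofaces (by rw [hA.1 c hc]; omega)).mp hsub, hc⟩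
    · rintro ⟨hsub, hc⟩
      exact ⟨hc, (gridCell_subset_iff_mem_cofaces (by rw [hA.1 c hc]; omega)).mpr hsub⟩
  have heven := hA.2 v T hT
  rw [hset, Set.ncard_coe_finset] at heven
  simp only [coeff₂, sum_boole]
  exact ZMod.natCast_eq_zero_iff_even.mpr heven

lemma insert_compl_pair {j z : Fin N} (hjz : j ≠ z) :
    insert j ({j, z}ᶜ : Finset (Fin N)) = {z}ᶜ := by
  ext i
  rcases eq_or_ne i j with rfl | hij <;> simp [*]

lemma IsCellCycle₂.coeff₂_square {A : Finset (CellIdx N)} (hA : IsCellCycle₂ N (N - 1) A)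
    (hN : 2 ≤ N) {j z : Fin N} (hjz : j ≠ z) (v : Fin N → ℤ) :
    coeff₂ A (v, {z}ᶜ) + coeff₂ A (v - Pi.single j 1, {z}ᶜ) +
      (coeff₂ A (v, {j}ᶜ) + coeff₂ A (v - Pi.single z 1, {j}ᶜ)) = 0 := by
  have h := hA.sum_cofaces_coeff₂ (by omega) v (T := {j, z}ᶜ)
    (by rw [card_compl, card_pair hjz, Fintype.card_fin]; omega)
  rwa [sum_cofaces, compl_compl, sum_pair hjz, insert_compl_pair hjz, Finset.pair_comm,
    insert_compl_pair hjz.symm] at h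

def coordBound (A : Finset (CellIdx N)) : ℤ := ∑ c ∈ A, ∑ i, |c.1 i|

lemma abs_le_coordBound {A : Finset (CellIdx N)} {c : CellIdx N} (hc : c ∈ A) (i : Fin N) :
    |c.1 i| ≤ coordBound A :=
  calc |c.1 i| ≤ ∑ i, |c.1 i| := single_le_sum (fun i _ => abs_nonneg (c.1 i)) (mem_univ i)
    _ ≤ coordBound A :=
      single_le_sum (f := fun c : CellIdx N => ∑ i, |c.1 i|)
        (fun c _ => sum_nonneg fun i _ => abs_nonneg (c.1 i)) hc

lemma coeff₂_eq_zero_of_coordBound_lt {A : Finset (CellIdx N)} {x : Fin N → ℤ}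
    {S : Finset (Fin N)} {i : Fin N} (h : coordBound A < |x i|) : coeff₂ A (x, S) = 0 :=
  if_neg fun hc => (abs_le_coordBound hc i).not_gt h

lemma add_smul_single_apply_self (y : Fin N → ℤ) (m : ℤ) (z : Fin N) :
    (y + m • Pi.single z 1 : Fin N → ℤ) z = y z + m := by
  simp

lemma add_smul_single_apply_of_ne (y : Fin N → ℤ) (m : ℤ) {i z : Fin N} (hiz : i ≠ z) :
    (y + m • Pi.single z 1 : Fin N → ℤ) i = y i := by
  simp [hiz]

/-- The `k`-th term is the top face of the cube with corner `y + k e_z`; the cells of `A` all lie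
below height `coordBound A`, so the ray can be cut off there. -/
def rayParity (A : Finset (CellIdx N)) (z : Fin N) (y : Fin N → ℤ) : ZMod 2 :=
  ∑ k ∈ range (coordBound A - y z).toNat, coeff₂ A (y + (k + 1 : ℤ) • Pi.single z 1, {z}ᶜ)

lemma rayParity_eq_sum_range {A : Finset (CellIdx N)} {z : Fin N} {y : Fin N → ℤ} {n : ℕ}
    (hn : coordBound A - y z ≤ n) :
    rayParity A z y = ∑ k ∈ range n, coeff₂ A (y + (k + 1 : ℤ) • Pi.single z 1, {z}ᶜ) := by
  refine sum_subset (range_subset_range.mpr (by omega)) fun k _ hk => ?_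
  refine coeff₂_eq_zero_of_coordBound_lt (i := z) (lt_abs.mpr (Or.inl ?_))
  simp only [Finset.mem_range, not_lt, Int.toNat_le] at hk
  rw [add_smul_single_apply_self]
  omega

lemma rayParity_sub_single_self (A : Finset (CellIdx N)) (z : Fin N) (y : Fin N → ℤ) :
    rayParity A z (y - Pi.single z 1) = rayParity A z y + coeff₂ A (y, {z}ᶜ) := by
  set n := (coordBound A - y z).toNat
  rw [rayParity_eq_sum_range (n := n + 1) (by rw [Pi.sub_apply, Pi.single_eq_same]; omega),
    rayParity_eq_sum_range (n := n) (by omega), sum_range_succ']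
  congr 1
  · refine sum_congr rfl fun k _ => ?_
    congr 2
    push_cast
    module
  · simp

/-- For `j ≠ z` the rays from `y` and `y - e_j` bound a half-strip, along which the square
relations of the cycle telescope. -/
lemma rayParity_sub_single {A : Finset (CellIdx N)} (hA : IsCellCycle₂ N (N - 1) A)
    (hN : 2 ≤ N) (z j : Fin N) (y : Fin N → ℤ) :
    rayParity A z (y - Pi.single j 1) = rayParity A z y + coeff₂ A (y, {j}ᶜ) := by
  rcases eq_or_ne j z with rfl | hjz
  · exact rayParity_sub_single_self A j y
  set g : ℕ → ZMod 2 := fun k => coeff₂ A (y + (k : ℤ) • Pi.single z 1, {j}ᶜ)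
  set n := (coordBound A - y z + 1).toNat
  have hyz : (y - Pi.single j 1 : Fin N → ℤ) z = y z := by simp [hjz.symm]
  have hgn : g n = 0 := coeff₂_eq_zero_of_coordBound_lt (i := z)
    (lt_abs.mpr (Or.inl (by rw [add_smul_single_apply_self]; omega)))
  have hsquare : ∀ k ∈ range n,
      coeff₂ A (y + (k + 1 : ℤ) • Pi.single z 1, {z}ᶜ) +
        coeff₂ A (y - Pi.single j 1 + (k + 1 : ℤ) • Pi.single z 1, {z}ᶜ) = g (k + 1) - g k := by
    intro k _
    have h := hA.coeff₂_square hN hjz (y + (k + 1 : ℤ) • Pi.single z 1)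
    rw [CharTwo.add_eq_zero] at h
    rw [CharTwo.sub_eq_add (g (k + 1))]
    convert h using 4 <;> push_cast <;> module
  have hsum := sum_congr rfl hsquare
  rw [sum_add_distrib, ← rayParity_eq_sum_range (by omega), ← rayParity_eq_sum_range (by omega),
    sum_range_sub, hgn, zero_sub, CharTwo.neg_eq] at hsum
  have hg0 : g 0 = coeff₂ A (y, {j}ᶜ) := by simp [g]
  rw [← hg0, ← hsum, ← add_assoc, CharTwo.add_self_eq_zero, zero_add]

lemma rayParity_eq_zero_of_coordBound_le {A : Finset (CellIdx N)} {z : Fin N}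
    {y : Fin N → ℤ} (h : coordBound A ≤ y z) : rayParity A z y = 0 := by
  simp [rayParity, Int.toNat_eq_zero.mpr (sub_nonpos.mpr h)]

lemma rayParity_eq_zero_of_coordBound_lt_abs {A : Finset (CellIdx N)} {z i : Fin N}
    {y : Fin N → ℤ} (hiz : i ≠ z) (h : coordBound A < |y i|) : rayParity A z y = 0 :=
  sum_eq_zero fun _ _ =>
    coeff₂_eq_zero_of_coordBound_lt (i := i) (by rwa [add_smul_single_apply_of_ne _ _ hiz])

lemma rayParity_eq_zero_of_lt_neg_coordBound {A : Finset (CellIdx N)}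
    (hA : IsCellCycle₂ N (N - 1) A) (hN : 2 ≤ N) {z : Fin N} {y : Fin N → ℤ}
    (h : y z < -coordBound A) : rayParity A z y = 0 := by
  have : Nontrivial (Fin N) := Fin.nontrivial_iff_two_le.mpr hN
  obtain ⟨j, hjz⟩ := exists_ne z
  have hshift : ∀ m : ℕ, rayParity A z (y + (m : ℤ) • Pi.single j 1) = rayParity A z y := by
    intro m
    induction m with
    | zero => simp
    | succ m ih =>
      have hface : coeff₂ A (y + ((m + 1 : ℕ) : ℤ) • Pi.single j 1, {j}ᶜ) = 0 :=
        coeff₂_eq_zero_of_coordBound_lt (i := z)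
          (lt_abs.mpr (Or.inr (by rw [add_smul_single_apply_of_ne _ _ hjz.symm]; omega)))
      rw [← ih, ← add_zero (rayParity A z (y + _)), ← hface, ← rayParity_sub_single hA hN]
      congr 1
      push_cast
      module
  rw [← hshift (coordBound A + 1 - y j).toNat]
  exact rayParity_eq_zero_of_coordBound_lt_abs hjz
    (lt_abs.mpr (Or.inl (by rw [add_smul_single_apply_self]; omega)))

lemma finite_support_rayParity {A : Finset (CellIdx N)} (hA : IsCellCycle₂ N (N - 1) A)
    (hN : 2 ≤ N) (z : Fin N) : (Function.support (rayParity A z)).Finite := by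
  refine (Set.finite_Icc (fun _ => -coordBound A) (fun _ => coordBound A)).subset fun y hy => ?_
  by_contra hout
  simp only [Set.mem_Icc, Pi.le_def, ← forall_and, not_forall] at hout
  obtain ⟨i, hi⟩ := hout
  refine hy ?_
  rcases eq_or_ne i z with rfl | hiz
  · rcases not_and_or.mp hi with h | h
    · exact rayParity_eq_zero_of_lt_neg_coordBound hA hN (by omega)
    · exact rayParity_eq_zero_of_coordBound_le (by omega)
  · exact rayParity_eq_zero_of_coordBound_lt_abs hiz (by rw [lt_abs, lt_neg]; omega)

lemma finite_support_val_rayParity {A : Finset (CellIdx N)} (hA : IsCellCycle₂ N (N - 1) A)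
    (hN : 2 ≤ N) (z : Fin N) :
    (Function.support fun y => ((rayParity A z y).val : ℤ)).Finite :=
  (finite_support_rayParity hA hN z).subset fun y hy h => hy (by simp [h])

/-- The cell `(y, univ)` is the unit cube with corner `y`. -/
def orientation {A : Finset (CellIdx N)} (hA : IsCellCycle₂ N (N - 1) A) (hN : 2 ≤ N)
    (z : Fin N) : CChain N :=
  cbd N ((Finsupp.ofSupportFinite _ (finite_support_val_rayParity hA hN z)).mapDomain (·, univ))

lemma ZMod.two_val_add_sub_val (a b : ZMod 2) :
    (((a + b).val : ℤ) - a.val = -1 ∨ ((a + b).val : ℤ) - a.val = 0 ∨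
      ((a + b).val : ℤ) - a.val = 1) ∧ (Odd (((a + b).val : ℤ) - a.val) ↔ b = 1) := by
  revert a b
  decide

lemma orientation_coeff_mem_and_odd_iff {A : Finset (CellIdx N)}
    (hA : IsCellCycle₂ N (N - 1) A) (hN : 2 ≤ N) (z : Fin N) (c : CellIdx N) :
    (orientation hA hN z c = -1 ∨ orientation hA hN z c = 0 ∨ orientation hA hN z c = 1) ∧
      (Odd (orientation hA hN z c) ↔ c ∈ A) := by
  obtain ⟨x, S⟩ := c
  by_cases hS : #S = N - 1
  · obtain ⟨t, ht⟩ : ∃ t, Sᶜ = {t} :=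
      card_eq_one.mp (by rw [card_compl, hS, Fintype.card_fin]; omega)
    rw [← compl_compl S, ht, orientation, cbd_mapDomain_univ_apply, Finsupp.ofSupportFinite_coe,
      rayParity_sub_single hA hN, ← coeff₂_eq_one_iff, Int.odd_mul]
    obtain ⟨hval, hodd⟩ := ZMod.two_val_add_sub_val (rayParity A z x) (coeff₂ A (x, {t}ᶜ))
    rcases cubeSign_eq_one_or_neg_one univ t with h | h <;> rw [h] <;>
      exact ⟨by omega, (and_iff_right (by decide)).trans hodd⟩
  · have hzero : orientation hA hN z (x, S) = 0 := Finsupp.notMem_support_iff.mp fun h =>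
      hS (isCellChain_cbd (isCellChain_mapDomain_univ _) _ h)
    rw [hzero]
    exact ⟨by simp, by simpa using fun h => hS (hA.1 _ h)⟩

lemma support_orientation {A : Finset (CellIdx N)} (hA : IsCellCycle₂ N (N - 1) A) (hN : 2 ≤ N)
    (z : Fin N) : (orientation hA hN z).support = A := by
  ext c
  obtain ⟨hval, hodd⟩ := orientation_coeff_mem_and_odd_iff hA hN z c
  rw [Finsupp.mem_support_iff, ← hodd]
  rcases hval with h | h | h <;> simp [h]

end

/-- Every cellular mod-2 `(N-1)`-cycle `A` in the unit grid of `ℝ^N` is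
orientable: there is a cellular integral `(N-1)`-cycle `R` with coefficients in `{-1,0,1}`
whose mod-2 reduction is `A` and whose support equals the support of `A`. -/
theorem codimension_one_orientable (N : ℕ) (hN : 2 ≤ N) (A : Finset (CellIdx N))
    (hA : IsCellCycle₂ N (N - 1) A) :
    ∃ R : CChain N, IsCellChain N (N - 1) R ∧ cbd N R = 0 ∧
      (∀ c : CellIdx N, R c = -1 ∨ R c = 0 ∨ R c = 1) ∧
      (∀ c : CellIdx N, Odd (R c) ↔ c ∈ A) ∧
      (⋃ c ∈ R.support, gridCell N c.1 c.2) = ⋃ c ∈ A, gridCell N c.1 c.2 := by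
  set z : Fin N := ⟨0, by omega⟩
  have hcoeff := orientation_coeff_mem_and_odd_iff hA hN z
  exact ⟨orientation hA hN z, isCellChain_cbd (isCellChain_mapDomain_univ _), cbd_cbd _,
    fun c => (hcoeff c).1, fun c => (hcoeff c).2, by rw [support_orientation]⟩

end
end

section
/- Let W ⊆ ℝ^N be an open set and define w(x) = max{√N, d(x, ℝ^N∖W)} for x ∈ ℝ^N. Then there exists a countable collection T of closed dyadic cubes of side length at least 1 (cubes of the form 2^k·(m + [0,1]^N) with k ≥ 0 an integer and m ∈ ℤ^N) such that the cubes in T have pairwise disjoint interiors, their union is all of ℝ^N, and every D ∈ T satisfies w(x)/4 ≤ diam D ≤ w(x) for every x ∈ D. In particular, any two cubes of T that intersect have diameters within a factor of 4 of each other. -/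
open MeasureTheory Metric Set
open scoped ENNReal NNReal

noncomputable section

/-- The Whitney weight `w(x) = max (√N) (d(x, ℝ^N \ W))`. -/
def whitneyWeight (N : ℕ) (W : Set (Euc N)) (x : Euc N) : ℝ :=
  max (Real.sqrt N) (Metric.infDist x Wᶜ)

/-- The closed dyadic cube `2^k (m + [0,1]^N)` of side length `2^k ≥ 1`. -/
def dyadicCube (N : ℕ) (k : ℕ) (m : Fin N → ℤ) : Set (Euc N) :=
  {y | ∀ i, (2 : ℝ) ^ k * (m i : ℝ) ≤ y i ∧ y i ≤ (2 : ℝ) ^ k * ((m i : ℝ) + 1)}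

/-! Call a set admissible if its diameter is at most `w` at each of its points. Dyadic cubes of
side `1` are admissible because `w ≥ √N`, while the dyadic cubes containing a fixed point `x`
stop being admissible once their diameter exceeds `w x`. So every point lies in a maximal
admissible dyadic cube, one whose parent is not admissible; these form `T`. Admissibility passes
to subsets, and two dyadic cubes with a common interior point are nested, so two maximal ones
sharing an interior point coincide. Finally the parent `P ⊇ D` has `diam P = 2 diam D` and a
point `y` with `w y < diam P`, and `w` is `1`-Lipschitz, whence `w x < 4 diam D` on `D`. -/

namespace Whitney

variable {N : ℕ}

lemma interior_dyadicCube (k : ℕ) (m : Fin N → ℤ) :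
    interior (dyadicCube N k m) =
      {y | ∀ i, (2 : ℝ) ^ k * (m i : ℝ) < y i ∧ y i < (2 : ℝ) ^ k * ((m i : ℝ) + 1)} := by
  have h : dyadicCube N k m = (PiLp.homeomorph 2 fun _ : Fin N => ℝ) ⁻¹'
      Set.univ.pi fun i => Icc ((2 : ℝ) ^ k * m i) (2 ^ k * (m i + 1)) := by
    ext y; simp only [dyadicCube, PiLp.homeomorph, mem_preimage, mem_univ_pi, mem_Icc]; rfl
  rw [h, ← Homeomorph.preimage_interior, interior_pi_set Set.finite_univ]
  ext y; simp [PiLp.homeomorph]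

lemma floor_div_two_pow_succ {K : Type*} [Field K] [LinearOrder K] [IsStrictOrderedRing K]
    [FloorRing K] (t : K) (k : ℕ) : ⌊t / 2 ^ (k + 1)⌋ = ⌊t / 2 ^ k⌋ / 2 := by
  simpa [pow_succ, div_div] using Int.floor_div_natCast (t / 2 ^ k) 2

lemma dyadicCube_subset_succ (k : ℕ) (m : Fin N → ℤ) :
    dyadicCube N k m ⊆ dyadicCube N (k + 1) fun i => m i / 2 := by
  intro y hy i
  obtain ⟨hlo, hhi⟩ := hy i
  have hm₁ : 2 * ((m i / 2 : ℤ) : ℝ) ≤ m i := by exact_mod_cast (by omega : 2 * (m i / 2) ≤ m i)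
  have hm₂ : (m i : ℝ) + 1 ≤ 2 * ((m i / 2 : ℤ) : ℝ) + 2 := by
    exact_mod_cast (by omega : m i + 1 ≤ 2 * (m i / 2) + 2)
  have hk : (0 : ℝ) < 2 ^ k := by positivity
  rw [pow_succ]
  constructor <;> nlinarith

def dyadicIndex (k : ℕ) (x : Euc N) : Fin N → ℤ := fun i => ⌊x i / 2 ^ k⌋

lemma mem_dyadicCube_dyadicIndex (k : ℕ) (x : Euc N) : x ∈ dyadicCube N k (dyadicIndex k x) := by
  intro i
  have hk : (0 : ℝ) < 2 ^ k := by positivity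
  have h₁ := Int.floor_le (x i / 2 ^ k)
  have h₂ := Int.lt_floor_add_one (x i / 2 ^ k)
  rw [le_div_iff₀ hk] at h₁
  rw [div_lt_iff₀ hk] at h₂
  simp only [dyadicIndex]
  constructor <;> linarith

lemma dyadicIndex_succ (k : ℕ) (x : Euc N) :
    dyadicIndex (k + 1) x = fun i => dyadicIndex k x i / 2 :=
  funext fun i => floor_div_two_pow_succ (x i) k

lemma monotone_dyadicCube_dyadicIndex (x : Euc N) :
    Monotone fun k => dyadicCube N k (dyadicIndex k x) :=
  monotone_nat_of_le_succ fun k => by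
    simpa only [dyadicIndex_succ] using dyadicCube_subset_succ k (dyadicIndex k x)

lemma eq_dyadicIndex_of_mem_interior {k : ℕ} {m : Fin N → ℤ} {z : Euc N}
    (hz : z ∈ interior (dyadicCube N k m)) : m = dyadicIndex k z := by
  rw [interior_dyadicCube] at hz
  funext i
  obtain ⟨hlo, hhi⟩ := hz i
  have hk : (0 : ℝ) < 2 ^ k := by positivity
  refine (Int.floor_eq_iff.2 ⟨?_, ?_⟩).symm
  · rw [le_div_iff₀ hk]; linarith
  · rw [div_lt_iff₀ hk]; linarith

lemma dist_le_of_mem_dyadicCube {k : ℕ} {m : Fin N → ℤ} {y y' : Euc N}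
    (hy : y ∈ dyadicCube N k m) (hy' : y' ∈ dyadicCube N k m) :
    dist y y' ≤ 2 ^ k * √N := by
  have hcoord : ∀ i, dist (y i) (y' i) ^ 2 ≤ ((2 : ℝ) ^ k) ^ 2 := fun i => by
    obtain ⟨a₁, a₂⟩ := hy i
    obtain ⟨b₁, b₂⟩ := hy' i
    rw [Real.dist_eq, sq_abs]
    nlinarith
  calc dist y y' = √(∑ i, dist (y i) (y' i) ^ 2) := EuclideanSpace.dist_eq y y'
    _ ≤ √(∑ _i : Fin N, ((2 : ℝ) ^ k) ^ 2) :=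
      Real.sqrt_le_sqrt (Finset.sum_le_sum fun i _ => hcoord i)
    _ = 2 ^ k * √N := by simp [mul_comm]

lemma isBounded_dyadicCube (k : ℕ) (m : Fin N → ℤ) : Bornology.IsBounded (dyadicCube N k m) :=
  Metric.isBounded_iff.2 ⟨_, fun _ hy _ hy' => dist_le_of_mem_dyadicCube hy hy'⟩

lemma diam_dyadicCube (k : ℕ) (m : Fin N → ℤ) : diam (dyadicCube N k m) = 2 ^ k * √N := by
  refine le_antisymm (diam_le_of_forall_dist_le (by positivity)
    fun _ hy _ hy' => dist_le_of_mem_dyadicCube hy hy') ?_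
  set p : Euc N := WithLp.toLp 2 fun i => 2 ^ k * (m i : ℝ)
  set q : Euc N := WithLp.toLp 2 fun i => 2 ^ k * ((m i : ℝ) + 1)
  have hp : p ∈ dyadicCube N k m := fun i => ⟨le_rfl, by simp [p]⟩
  have hq : q ∈ dyadicCube N k m := fun i => ⟨by simp [q], le_rfl⟩
  have hcoord : ∀ i, dist (p i) (q i) ^ 2 = ((2 : ℝ) ^ k) ^ 2 := fun i => by
    simp only [p, q, Real.dist_eq, sq_abs]; ring
  have hpq : dist p q = 2 ^ k * √N := by
    simp [EuclideanSpace.dist_eq, hcoord, mul_comm]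
  exact hpq ▸ dist_le_diam_of_mem (isBounded_dyadicCube k m) hp hq

lemma lipschitzWith_whitneyWeight (W : Set (Euc N)) : LipschitzWith 1 (whitneyWeight N W) :=
  (lipschitz_infDist_pt Wᶜ).const_max _

def IsAdmissible (W D : Set (Euc N)) : Prop := ∀ y ∈ D, diam D ≤ whitneyWeight N W y

lemma IsAdmissible.mono {W D D' : Set (Euc N)} (h : IsAdmissible W D') (hDD' : D ⊆ D')
    (hD' : Bornology.IsBounded D') : IsAdmissible W D :=
  fun y hy => (diam_mono hDD' hD').trans (h y (hDD' hy))

/-- `fun i => m i / 2` indexes the parent cube, as integer division by `2` rounds down. -/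
def IsWhitneyCube (W : Set (Euc N)) (k : ℕ) (m : Fin N → ℤ) : Prop :=
  IsAdmissible W (dyadicCube N k m) ∧ ¬IsAdmissible W (dyadicCube N (k + 1) fun i => m i / 2)

variable {W : Set (Euc N)}

lemma IsWhitneyCube.whitneyWeight_div_four_le_diam {k : ℕ} {m : Fin N → ℤ}
    (h : IsWhitneyCube W k m) {x : Euc N} (hx : x ∈ dyadicCube N k m) :
    whitneyWeight N W x / 4 ≤ diam (dyadicCube N k m) := by
  obtain ⟨y, hy, hwy⟩ : ∃ y ∈ dyadicCube N (k + 1) (fun i => m i / 2),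
      whitneyWeight N W y < diam (dyadicCube N (k + 1) fun i => m i / 2) := by
    simpa [IsAdmissible] using h.2
  have hxy : dist x y ≤ diam (dyadicCube N (k + 1) fun i => m i / 2) :=
    dist_le_diam_of_mem (isBounded_dyadicCube _ _) (dyadicCube_subset_succ k m hx) hy
  have hwx : whitneyWeight N W x ≤ whitneyWeight N W y + dist x y := by
    simpa using (lipschitzWith_whitneyWeight W).le_add_mul x y
  rw [diam_dyadicCube, pow_succ] at hwy hxy
  rw [diam_dyadicCube]
  linarith

lemma IsWhitneyCube.le_of_isAdmissible {k : ℕ} {m : Fin N → ℤ} (h : IsWhitneyCube W k m)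
    {z : Euc N} (hz : z ∈ interior (dyadicCube N k m)) {k' : ℕ}
    (h' : IsAdmissible W (dyadicCube N k' (dyadicIndex k' z))) : k' ≤ k := by
  by_contra! hkk'
  apply h.2
  rw [eq_dyadicIndex_of_mem_interior hz, ← dyadicIndex_succ]
  exact h'.mono (monotone_dyadicCube_dyadicIndex z hkk') (isBounded_dyadicCube _ _)

lemma IsWhitneyCube.eq_of_mem_interior {k k' : ℕ} {m m' : Fin N → ℤ}
    (h : IsWhitneyCube W k m) (h' : IsWhitneyCube W k' m') {z : Euc N}
    (hz : z ∈ interior (dyadicCube N k m)) (hz' : z ∈ interior (dyadicCube N k' m')) :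
    dyadicCube N k m = dyadicCube N k' m' := by
  have hm := eq_dyadicIndex_of_mem_interior hz
  have hm' := eq_dyadicIndex_of_mem_interior hz'
  obtain rfl : k = k' := le_antisymm (h'.le_of_isAdmissible hz' (hm ▸ h.1))
    (h.le_of_isAdmissible hz (hm' ▸ h'.1))
  rw [hm, hm']

lemma exists_isWhitneyCube_mem (hN : 1 ≤ N) (x : Euc N) :
    ∃ k m, IsWhitneyCube W k m ∧ x ∈ dyadicCube N k m := by
  set P : ℕ → Prop := fun k => IsAdmissible W (dyadicCube N k (dyadicIndex k x))
  have hP₀ : P 0 := fun y _ => by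
    rw [diam_dyadicCube, pow_zero, one_mul]; exact le_max_left _ _
  obtain ⟨n, hn⟩ : ∃ n, ¬P n := by
    have hN' : 0 < √(N : ℝ) := Real.sqrt_pos.2 (by exact_mod_cast hN)
    obtain ⟨n, hn⟩ := pow_unbounded_of_one_lt (whitneyWeight N W x / √N) one_lt_two
    refine ⟨n, fun hPn => ?_⟩
    have := hPn x (mem_dyadicCube_dyadicIndex n x)
    rw [diam_dyadicCube] at this
    rw [div_lt_iff₀ hN'] at hn
    linarith
  obtain ⟨k, hk, hk'⟩ : ∃ k, P k ∧ ¬P (k + 1) := by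
    by_contra! h
    exact hn (Nat.rec hP₀ h n)
  refine ⟨k, dyadicIndex k x, ⟨hk, ?_⟩, mem_dyadicCube_dyadicIndex k x⟩
  rwa [← dyadicIndex_succ]

end Whitney

theorem coarse_whitney_cubulation_general (N : ℕ) (hN : 1 ≤ N) (W : Set (Euc N)) :
    ∃ T : Set (Set (Euc N)), T.Countable ∧
      (∀ D ∈ T, ∃ (k : ℕ) (m : Fin N → ℤ), D = dyadicCube N k m) ∧
      (∀ D ∈ T, ∀ D' ∈ T, D ≠ D' → interior D ∩ interior D' = ∅) ∧
      ⋃₀ T = Set.univ ∧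
      (∀ D ∈ T, ∀ x ∈ D,
        whitneyWeight N W x / 4 ≤ Metric.diam D ∧ Metric.diam D ≤ whitneyWeight N W x) ∧
      (∀ D ∈ T, ∀ D' ∈ T, (D ∩ D').Nonempty → Metric.diam D ≤ 4 * Metric.diam D') := by
  set T := (fun p : ℕ × (Fin N → ℤ) => dyadicCube N p.1 p.2) ''
    {p | Whitney.IsWhitneyCube W p.1 p.2}
  have hweight : ∀ D ∈ T, ∀ x ∈ D,
      whitneyWeight N W x / 4 ≤ diam D ∧ diam D ≤ whitneyWeight N W x := by
    rintro _ ⟨⟨k, m⟩, h, rfl⟩ x hx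
    exact ⟨h.whitneyWeight_div_four_le_diam hx, h.1 x hx⟩
  refine ⟨T, (Set.to_countable _).image _, ?_, ?_, ?_, hweight, ?_⟩
  · rintro _ ⟨⟨k, m⟩, -, rfl⟩
    exact ⟨k, m, rfl⟩
  · rintro _ ⟨⟨k, m⟩, h, rfl⟩ _ ⟨⟨k', m'⟩, h', rfl⟩ hne
    refine Set.eq_empty_of_forall_notMem fun z ⟨hz, hz'⟩ => hne ?_
    exact h.eq_of_mem_interior h' hz hz'
  · refine Set.eq_univ_of_forall fun x => ?_
    obtain ⟨k, m, h, hx⟩ := Whitney.exists_isWhitneyCube_mem (W := W) hN x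
    exact ⟨_, ⟨(k, m), h, rfl⟩, hx⟩
  · rintro D hD D' hD' ⟨x, hx, hx'⟩
    linarith [(hweight D hD x hx).2, (hweight D' hD' x hx').1]

/-- coarse Whitney cubulation.  For every open `W ⊆ ℝ^N` there is a
countable collection of closed dyadic cubes of side at least `1` with pairwise disjoint
interiors covering `ℝ^N`, each cube `D` satisfying `w(x)/4 ≤ diam D ≤ w(x)` for all
`x ∈ D`; in particular, intersecting cubes have comparable diameters. -/
theorem coarse_whitney_cubulation (N : ℕ) (hN : 1 ≤ N) (W : Set (Euc N)) (hW : IsOpen W) :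
    ∃ T : Set (Set (Euc N)), T.Countable ∧
      (∀ D ∈ T, ∃ (k : ℕ) (m : Fin N → ℤ), D = dyadicCube N k m) ∧
      (∀ D ∈ T, ∀ D' ∈ T, D ≠ D' → interior D ∩ interior D' = ∅) ∧
      ⋃₀ T = Set.univ ∧
      (∀ D ∈ T, ∀ x ∈ D,
        whitneyWeight N W x / 4 ≤ Metric.diam D ∧ Metric.diam D ≤ whitneyWeight N W x) ∧
      (∀ D ∈ T, ∀ D' ∈ T, (D ∩ D').Nonempty → Metric.diam D ≤ 4 * Metric.diam D') :=
  coarse_whitney_cubulation_general N hN W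
end
end

section
/- Let E ⊆ ℝ^N be Ahlfors d-regular with constant c, let Q ⊆ E, let i ∈ ℤ with 2^i < diam E, and suppose C > 1 is such that H^d(∂Q(t·2^i)) ≤ C·t^{1/C}·2^{id} for all t > 0. Then there is a constant C₁ depending only on d, N, and c such that for every 0 < t < 1, the relative boundary ∂Q can be covered by at most C₁·C·t^{1/C − d} balls of radius t·2^i. -/
/-
Take a maximal `r`-separated subset `F` of `∂Q`, with `r = t·2^i`; by maximality the closed
`r`-balls around `F` cover `∂Q`. The closed `r/2`-balls around `F` are pairwise disjoint, and
their traces on `E` lie in `∂Q(r)` because their centres are limits of points of both `Q` and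
`E \ Q`. Ahlfors regularity gives each trace measure at least `c⁻¹ (r/2)^d`, so
`#F · c⁻¹ (t 2^i / 2)^d ≤ H^d(∂Q(r)) ≤ C t^{1/C} 2^{id}`, i.e. `#F ≤ 2^d c C t^{1/C - d}`.
-/

open MeasureTheory Metric Set
open scoped ENNReal NNReal

noncomputable section

/-- `E ⊆ ℝ^N` is Ahlfors `d`-regular with constant `c`. -/
def AhlforsRegular (N d : ℕ) (c : ℝ) (E : Set (Euc N)) : Prop :=
  IsClosed E ∧ ∀ x ∈ E, ∀ r : ℝ, 0 < r → ENNReal.ofReal r < EMetric.diam E →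
    ENNReal.ofReal (c⁻¹ * r ^ d) ≤ μH[(d : ℝ)] (E ∩ closedBall x r) ∧
      μH[(d : ℝ)] (E ∩ closedBall x r) ≤ ENNReal.ofReal (c * r ^ d)

/-- `E ⊆ ℝ^N` is uniformly `d`-rectifiable with constant `c` (Ahlfors regularity together
with big pieces of Lipschitz images). -/
def UniformlyRectifiable (N d : ℕ) (c : ℝ) (E : Set (Euc N)) : Prop :=
  AhlforsRegular N d c E ∧
  ∀ x ∈ E, ∀ r : ℝ, 0 < r → ENNReal.ofReal r < EMetric.diam E →
    ∃ f : Euc d → Euc N, LipschitzWith (Real.toNNReal c) f ∧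
      ENNReal.ofReal (c⁻¹ * r ^ d) ≤ μH[(d : ℝ)] (f '' closedBall 0 r ∩ E ∩ closedBall x r)

/-- The relative `ρ`-boundary neighborhood `∂Q(ρ)` of `Q ⊆ E`. -/
def bdryNbhd (N : ℕ) (E Q : Set (Euc N)) (ρ : ℝ) : Set (Euc N) :=
  {x ∈ Q | EMetric.infEdist x (E \ Q) ≤ ENNReal.ofReal ρ} ∪
    {x ∈ E \ Q | EMetric.infEdist x Q ≤ ENNReal.ofReal ρ}

/-- The boundary of `Q` relative to `E`: the intersection of the closures of `Q` and of
`E \ Q`. -/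
def relBd (N : ℕ) (E Q : Set (Euc N)) : Set (Euc N) := closure Q ∩ closure (E \ Q)

theorem Metric.exists_finset_subset_iUnion_closedBall_of_card_le {X : Type*}
    [PseudoMetricSpace X] {A : Set X} {ε : ℝ≥0} {M : ℝ}
    (h : ∀ F : Finset X, ↑F ⊆ A → IsSeparated ε (F : Set X) → (F.card : ℝ) ≤ M) :
    ∃ F : Finset X, (F.card : ℝ) ≤ M ∧ A ⊆ ⋃ y ∈ F, closedBall y ε := by
  have hM : 0 ≤ M := by simpa using h ∅ (by simp) (by simp)
  have hsep : ∀ C ⊆ A, IsSeparated ε C → C.encard ≤ ⌊M⌋₊ := by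
    intro C hCA hC
    by_contra! hlt
    obtain ⟨C', hC'C, hC'⟩ := exists_subset_encard_eq (Order.add_one_le_of_lt hlt)
    have hfin : C'.Finite := finite_of_encard_eq_coe hC'
    have hcard : hfin.toFinset.card = ⌊M⌋₊ + 1 := by
      rw [← ENat.natCast_inj, ← encard_coe_eq_coe_finsetCard, Finite.coe_toFinset, hC']
      rfl
    have := h hfin.toFinset (by simpa using hC'C.trans hCA) (by simpa using hC.subset hC'C)
    rw [hcard] at this
    exact (Nat.lt_floor_add_one M).not_ge (by exact_mod_cast this)
  have hpack : packingNumber ε A ≤ ⌊M⌋₊ := iSup₂_le fun C hCA => iSup_le (hsep C hCA)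
  have hfinite : packingNumber ε A ≠ ⊤ := ne_top_of_le_ne_top (by simp) hpack
  have hS : (maximalSeparatedSet ε A).Finite :=
    finite_of_encard_le_coe (encard_maximalSeparatedSet hfinite ▸ hpack)
  refine ⟨hS.toFinset, ?_, ?_⟩
  · have : hS.toFinset.card ≤ ⌊M⌋₊ := by
      rw [← ENat.natCast_le_natCast, ← encard_coe_eq_coe_finsetCard, Finite.coe_toFinset]
      exact encard_maximalSeparatedSet hfinite ▸ hpack
    exact (Nat.cast_le.mpr this).trans (Nat.floor_le hM)
  · simpa using (isCover_maximalSeparatedSet hfinite).subset_iUnion_closedBall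

theorem Metric.IsSeparated.card_mul_le_measure_iUnion {X : Type*} [MetricSpace X]
    [MeasurableSpace X] [OpensMeasurableSpace X] (μ : Measure X) {E : Set X}
    (hE : MeasurableSet E) {F : Finset X} {ρ : ℝ} (hF : IsSeparated (ENNReal.ofReal ρ) (F : Set X))
    {m : ℝ≥0∞} (hm : ∀ y ∈ F, m ≤ μ (E ∩ closedBall y (ρ / 2))) :
    F.card * m ≤ μ (⋃ y ∈ F, E ∩ closedBall y (ρ / 2)) := by
  have hdisj : (F : Set X).PairwiseDisjoint fun y => E ∩ closedBall y (ρ / 2) := by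
    intro x hx y hy hxy
    have hρ : ρ < dist x y := by
      have : ENNReal.ofReal ρ < edist x y := hF hx hy hxy
      rw [edist_dist, ENNReal.ofReal_lt_ofReal_iff'] at this
      exact this.1
    exact ((closedBall_disjoint_closedBall (by linarith)).mono inter_subset_right
      inter_subset_right)
  rw [measure_biUnion_finset hdisj fun y _ => hE.inter measurableSet_closedBall, ← nsmul_eq_mul]
  exact Finset.card_nsmul_le_sum F _ _ hm

theorem relBd_subset {N : ℕ} {E Q : Set (Euc N)} (hE : IsClosed E) (hQ : Q ⊆ E) :
    relBd N E Q ⊆ E :=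
  fun _ hx => hE.closure_subset_iff.mpr hQ hx.1

theorem inter_closedBall_subset_bdryNbhd {N : ℕ} {E Q : Set (Euc N)} {y : Euc N}
    (hy : y ∈ relBd N E Q) (ρ : ℝ) : E ∩ closedBall y ρ ⊆ bdryNbhd N E Q ρ := by
  rintro z ⟨hzE, hzy⟩
  have hzy : edist z y ≤ ENNReal.ofReal ρ := by
    rw [edist_dist]; exact ENNReal.ofReal_le_ofReal hzy
  have hclose {S : Set (Euc N)} (hS : y ∈ closure S) : infEDist z S ≤ ENNReal.ofReal ρ :=
    calc infEDist z S ≤ edist z y + infEDist y S := infEDist_le_edist_add_infEDist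
      _ = edist z y := by rw [mem_closure_iff_infEDist_zero.mp hS, add_zero]
      _ ≤ _ := hzy
  show z ∈ {x ∈ Q | infEDist x (E \ Q) ≤ _} ∪ {x ∈ E \ Q | infEDist x Q ≤ _}
  by_cases hzQ : z ∈ Q
  · exact Or.inl ⟨hzQ, hclose hy.2⟩
  · exact Or.inr ⟨⟨hzE, hzQ⟩, hclose hy.1⟩

theorem AhlforsRegular.card_mul_le_hausdorffMeasure_bdryNbhd {N d : ℕ} {c : ℝ}
    {E Q : Set (Euc N)} (hE : AhlforsRegular N d c E) (hQ : Q ⊆ E) {r : ℝ} (hr : 0 < r)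
    (hrE : ENNReal.ofReal r < ediam E) {F : Finset (Euc N)} (hFQ : ↑F ⊆ relBd N E Q)
    (hF : IsSeparated (ENNReal.ofReal r) (F : Set (Euc N))) :
    F.card * ENNReal.ofReal (c⁻¹ * (r / 2) ^ d) ≤ μH[(d : ℝ)] (bdryNbhd N E Q r) := by
  have hball_lower (y : Euc N) (hy : y ∈ F) :
      ENNReal.ofReal (c⁻¹ * (r / 2) ^ d) ≤ μH[(d : ℝ)] (E ∩ closedBall y (r / 2)) :=
    (hE.2 y (relBd_subset hE.1 hQ (hFQ hy)) (r / 2) (by positivity)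
      ((ENNReal.ofReal_le_ofReal (by linarith)).trans_lt hrE)).1
  have hballs_subset : ⋃ y ∈ F, E ∩ closedBall y (r / 2) ⊆ bdryNbhd N E Q r :=
    iUnion₂_subset fun y hy =>
      (inter_subset_inter_right _ (closedBall_subset_closedBall (by linarith))).trans
        (inter_closedBall_subset_bdryNbhd (hFQ hy) r)
  exact (hF.card_mul_le_measure_iUnion _ hE.1.measurableSet hball_lower).trans
    (measure_mono hballs_subset)

theorem natCast_le_of_mul_ofReal_le {n d : ℕ} {c C t a : ℝ} (hc : 0 < c) (hC : 0 ≤ C)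
    (ht : 0 < t) (ha : 0 < a)
    (h : (n : ℝ≥0∞) * ENNReal.ofReal (c⁻¹ * (t * a / 2) ^ d) ≤
      ENNReal.ofReal (C * t ^ (1 / C) * a ^ d)) :
    (n : ℝ) ≤ 2 ^ d * c * C * t ^ (1 / C - d) := by
  rw [← ENNReal.ofReal_natCast, ← ENNReal.ofReal_mul (by positivity),
    ENNReal.ofReal_le_ofReal_iff (by positivity), div_pow, mul_pow] at h
  rw [Real.rpow_sub ht, Real.rpow_natCast, mul_div_assoc', le_div_iff₀ (by positivity)]
  field_simp at h
  linarith

/-- Let `E` be Ahlfors `d`-regular with constant `c`, let `Q ⊆ E`, let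
`2^i < diam E`, and suppose `C > 1` satisfies `H^d(∂Q(t·2^i)) ≤ C t^{1/C} 2^{id}` for all
`t > 0`.  Then there is a constant `C₁` depending only on `d`, `N`, `c` such that for every
`0 < t < 1` the relative boundary `∂Q` can be covered by at most `C₁ C t^{1/C - d}` balls of
radius `t·2^i`. -/
theorem pseudocube_boundary_covering (d N : ℕ) (c : ℝ) (hc : 1 ≤ c) :
    ∃ C₁ : ℝ, 0 < C₁ ∧
      ∀ (E Q : Set (Euc N)) (i : ℤ) (C : ℝ),
        AhlforsRegular N d c E → Q ⊆ E →
        ENNReal.ofReal ((2 : ℝ) ^ i) < EMetric.diam E → 1 < C →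
        (∀ t : ℝ, 0 < t →
          μH[(d : ℝ)] (bdryNbhd N E Q (t * (2 : ℝ) ^ i)) ≤
            ENNReal.ofReal (C * t ^ ((1 : ℝ) / C) * (2 : ℝ) ^ ((d : ℤ) * i))) →
        ∀ t : ℝ, 0 < t → t < 1 →
          ∃ F : Finset (Euc N),
            (F.card : ℝ) ≤ C₁ * C * t ^ ((1 : ℝ) / C - d) ∧
            relBd N E Q ⊆ ⋃ y ∈ F, closedBall y (t * (2 : ℝ) ^ i) := by
  refine ⟨2 ^ d * c, by positivity, ?_⟩
  intro E Q i C hE hQE hdiam hC hbd t ht ht1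
  have h2i : (0 : ℝ) < 2 ^ i := by positivity
  have hr : 0 < t * 2 ^ i := by positivity
  have hrE : ENNReal.ofReal (t * 2 ^ i) < ediam E :=
    (ENNReal.ofReal_le_ofReal (by nlinarith)).trans_lt hdiam
  have hpow : (2 : ℝ) ^ ((d : ℤ) * i) = ((2 : ℝ) ^ i) ^ d := by
    rw [mul_comm, zpow_mul, zpow_natCast]
  have hpacking (F : Finset (Euc N)) (hFQ : ↑F ⊆ relBd N E Q)
      (hF : IsSeparated ((t * 2 ^ i).toNNReal : ℝ≥0∞) (F : Set (Euc N))) :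
      (F.card : ℝ) ≤ 2 ^ d * c * C * t ^ ((1 : ℝ) / C - d) :=
    natCast_le_of_mul_ofReal_le (by linarith) (by linarith) ht h2i <|
      (hE.card_mul_le_hausdorffMeasure_bdryNbhd hQE hr hrE hFQ hF).trans (hpow ▸ hbd t ht)
  obtain ⟨F, hcard, hcover⟩ := exists_finset_subset_iUnion_closedBall_of_card_le hpacking
  exact ⟨F, hcard, by simpa [Real.coe_toNNReal _ hr.le] using hcover⟩

end
end
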